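/- Let a, b, c, d, e ∈ ℂ ∖ {0} and f(x,y,z) = a + b·x + c·y + d·x³y⁷z²⁰ + e·x·y²·z⁵. If f has at least one singular point in (ℂ ∖ {0})³, then the set of singular points of f in (ℂ ∖ {0})³ has exactly 5 elements; these 5 points form a single orbit under the action (x,y,z) ↦ (x,y,εz) for ε a 5th root of unity (in particular all 5 have the same first two coordinates), and each of them is nondegenerate, i.e. the determinant of the 3×3 Hessian matrix of f there is nonzero. -/
import Mathlib

open MvPolynomial

noncomputable section

/-- `p` is a singular point of `h` lying in the torus `(ℂ ∖ {0})³`. -/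
def SingularAt3 (h : MvPolynomial (Fin 3) ℂ) (p : Fin 3 → ℂ) : Prop :=
  (∀ i, p i ≠ 0) ∧ eval p h = 0 ∧ ∀ i : Fin 3, eval p (pderiv i h) = 0

/-- Determinant of the Hessian matrix of a polynomial in three variables at `p`. -/
def hessDet3 (h : MvPolynomial (Fin 3) ℂ) (p : Fin 3 → ℂ) : ℂ :=
  Matrix.det (Matrix.of fun i j : Fin 3 => eval p (pderiv i (pderiv j h)))

/-- The polynomial `a + b·x + c·y + d·x³y⁷z²⁰ + e·x·y²·z⁵`. -/
def circuitB20 (a b c d e : ℂ) : MvPolynomial (Fin 3) ℂ :=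
  C a + C b * X 0 + C c * X 1 + C d * (X 0 ^ 3 * X 1 ^ 7 * X 2 ^ 20) +
    C e * (X 0 * X 1 ^ 2 * X 2 ^ 5)

namespace CircuitB20Aux

lemma pderiv_ofNat' (i : Fin 3) (n : ℕ) [n.AtLeastTwo] :
    pderiv i (no_index (OfNat.ofNat n) : MvPolynomial (Fin 3) ℂ) = 0 := by
  rw [← map_ofNat (C : ℂ →+* MvPolynomial (Fin 3) ℂ) n, pderiv_C]

variable {a b c d e : ℂ} {p : Fin 3 → ℂ}

lemma ev0 (a b c d e : ℂ) (p : Fin 3 → ℂ) : eval p (circuitB20 a b c d e) =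
    a + b * p 0 + c * p 1 + d * (p 0 ^ 3 * p 1 ^ 7 * p 2 ^ 20) + e * (p 0 * p 1 ^ 2 * p 2 ^ 5) := by
  simp [circuitB20]

lemma evx (a b c d e : ℂ) (p : Fin 3 → ℂ) : eval p (pderiv 0 (circuitB20 a b c d e)) =
    b + 3 * d * (p 0 ^ 2 * p 1 ^ 7 * p 2 ^ 20) + e * (p 1 ^ 2 * p 2 ^ 5) := by
  simp [circuitB20, pderiv_mul, pderiv_pow, pderiv_C, pderiv_ofNat']; ring

lemma evy (a b c d e : ℂ) (p : Fin 3 → ℂ) : eval p (pderiv 1 (circuitB20 a b c d e)) =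
    c + 7 * d * (p 0 ^ 3 * p 1 ^ 6 * p 2 ^ 20) + 2 * e * (p 0 * p 1 * p 2 ^ 5) := by
  simp [circuitB20, pderiv_mul, pderiv_pow, pderiv_C, pderiv_ofNat']; ring

lemma evz (a b c d e : ℂ) (p : Fin 3 → ℂ) : eval p (pderiv 2 (circuitB20 a b c d e)) =
    20 * d * (p 0 ^ 3 * p 1 ^ 7 * p 2 ^ 19) + 5 * e * (p 0 * p 1 ^ 2 * p 2 ^ 4) := by
  simp [circuitB20, pderiv_mul, pderiv_pow, pderiv_C, pderiv_ofNat']; ring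

lemma forward (h : SingularAt3 (circuitB20 a b c d e) p) :
    (∀ i, p i ≠ 0) ∧ b * p 0 = a ∧ c * p 1 = a ∧
      d * (p 0 ^ 3 * p 1 ^ 7 * p 2 ^ 20) = a ∧ e * (p 0 * p 1 ^ 2 * p 2 ^ 5) = -4 * a := by
  obtain ⟨hne, h0, hD⟩ := h
  rw [ev0] at h0
  have h1 := hD 0; have h2 := hD 1; have h3 := hD 2
  rw [evx] at h1; rw [evy] at h2; rw [evz] at h3
  have hm : d * (p 0 ^ 3 * p 1 ^ 7 * p 2 ^ 20) = a := by
    linear_combination -h0 + p 0 * h1 + p 1 * h2 - (2/5) * p 2 * h3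
  have hn : e * (p 0 * p 1 ^ 2 * p 2 ^ 5) = -4 * a := by
    linear_combination (1/5) * p 2 * h3 - 4 * hm
  refine ⟨hne, ?_, ?_, hm, hn⟩
  · linear_combination p 0 * h1 - 3 * hm - hn
  · linear_combination p 1 * h2 - 7 * hm - 2 * hn

lemma backward (ha : a ≠ 0) (hbx : b * p 0 = a) (hcy : c * p 1 = a)
    (hm : d * (p 0 ^ 3 * p 1 ^ 7 * p 2 ^ 20) = a)
    (hn : e * (p 0 * p 1 ^ 2 * p 2 ^ 5) = -4 * a) :
    SingularAt3 (circuitB20 a b c d e) p := by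
  have hp0 : p 0 ≠ 0 := by rintro h; rw [h, mul_zero] at hbx; exact ha hbx.symm
  have hp1 : p 1 ≠ 0 := by rintro h; rw [h, mul_zero] at hcy; exact ha hcy.symm
  have hp2 : p 2 ≠ 0 := by
    rintro h; rw [h] at hn; simp at hn; exact ha hn
  refine ⟨fun i => ?_, ?_, fun i => ?_⟩
  · fin_cases i <;> assumption
  · rw [ev0]; linear_combination hbx + hcy + hm + hn
  · fin_cases i
    · show eval p (pderiv 0 (circuitB20 a b c d e)) = 0
      rw [evx]
      have h : p 0 * (b + 3 * d * (p 0 ^ 2 * p 1 ^ 7 * p 2 ^ 20) + e * (p 1 ^ 2 * p 2 ^ 5)) = 0 := by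
        linear_combination hbx + 3 * hm + hn
      exact (mul_eq_zero.mp h).resolve_left hp0
    · show eval p (pderiv 1 (circuitB20 a b c d e)) = 0
      rw [evy]
      have h : p 1 * (c + 7 * d * (p 0 ^ 3 * p 1 ^ 6 * p 2 ^ 20) + 2 * e * (p 0 * p 1 * p 2 ^ 5)) = 0 := by
        linear_combination hcy + 7 * hm + 2 * hn
      exact (mul_eq_zero.mp h).resolve_left hp1
    · show eval p (pderiv 2 (circuitB20 a b c d e)) = 0
      rw [evz]
      have h : p 2 * (20 * d * (p 0 ^ 3 * p 1 ^ 7 * p 2 ^ 19) + 5 * e * (p 0 * p 1 ^ 2 * p 2 ^ 4)) = 0 := by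
        linear_combination 20 * hm + 5 * hn
      exact (mul_eq_zero.mp h).resolve_left hp2

lemma evxx (a b c d e : ℂ) (p : Fin 3 → ℂ) :
    eval p (pderiv 0 (pderiv 0 (circuitB20 a b c d e))) =
    6 * d * (p 0 * p 1 ^ 7 * p 2 ^ 20) := by
  simp [circuitB20, pderiv_mul, pderiv_pow, pderiv_C, pderiv_ofNat']; ring
lemma evxy (a b c d e : ℂ) (p : Fin 3 → ℂ) :
    eval p (pderiv 0 (pderiv 1 (circuitB20 a b c d e))) =
    21 * d * (p 0 ^ 2 * p 1 ^ 6 * p 2 ^ 20) + 2 * e * (p 1 * p 2 ^ 5) := by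
  simp [circuitB20, pderiv_mul, pderiv_pow, pderiv_C, pderiv_ofNat']; ring
lemma evxz (a b c d e : ℂ) (p : Fin 3 → ℂ) :
    eval p (pderiv 0 (pderiv 2 (circuitB20 a b c d e))) =
    60 * d * (p 0 ^ 2 * p 1 ^ 7 * p 2 ^ 19) + 5 * e * (p 1 ^ 2 * p 2 ^ 4) := by
  simp [circuitB20, pderiv_mul, pderiv_pow, pderiv_C, pderiv_ofNat']; ring
lemma evyx (a b c d e : ℂ) (p : Fin 3 → ℂ) :
    eval p (pderiv 1 (pderiv 0 (circuitB20 a b c d e))) =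
    21 * d * (p 0 ^ 2 * p 1 ^ 6 * p 2 ^ 20) + 2 * e * (p 1 * p 2 ^ 5) := by
  simp [circuitB20, pderiv_mul, pderiv_pow, pderiv_C, pderiv_ofNat']; ring
lemma evyy (a b c d e : ℂ) (p : Fin 3 → ℂ) :
    eval p (pderiv 1 (pderiv 1 (circuitB20 a b c d e))) =
    42 * d * (p 0 ^ 3 * p 1 ^ 5 * p 2 ^ 20) + 2 * e * (p 0 * p 2 ^ 5) := by
  simp [circuitB20, pderiv_mul, pderiv_pow, pderiv_C, pderiv_ofNat']; ring
lemma evyz (a b c d e : ℂ) (p : Fin 3 → ℂ) :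
    eval p (pderiv 1 (pderiv 2 (circuitB20 a b c d e))) =
    140 * d * (p 0 ^ 3 * p 1 ^ 6 * p 2 ^ 19) + 10 * e * (p 0 * p 1 * p 2 ^ 4) := by
  simp [circuitB20, pderiv_mul, pderiv_pow, pderiv_C, pderiv_ofNat']; ring
lemma evzx (a b c d e : ℂ) (p : Fin 3 → ℂ) :
    eval p (pderiv 2 (pderiv 0 (circuitB20 a b c d e))) =
    60 * d * (p 0 ^ 2 * p 1 ^ 7 * p 2 ^ 19) + 5 * e * (p 1 ^ 2 * p 2 ^ 4) := by
  simp [circuitB20, pderiv_mul, pderiv_pow, pderiv_C, pderiv_ofNat']; ring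
lemma evzy (a b c d e : ℂ) (p : Fin 3 → ℂ) :
    eval p (pderiv 2 (pderiv 1 (circuitB20 a b c d e))) =
    140 * d * (p 0 ^ 3 * p 1 ^ 6 * p 2 ^ 19) + 10 * e * (p 0 * p 1 * p 2 ^ 4) := by
  simp [circuitB20, pderiv_mul, pderiv_pow, pderiv_C, pderiv_ofNat']; ring
lemma evzz (a b c d e : ℂ) (p : Fin 3 → ℂ) :
    eval p (pderiv 2 (pderiv 2 (circuitB20 a b c d e))) =
    380 * d * (p 0 ^ 3 * p 1 ^ 7 * p 2 ^ 18) + 20 * e * (p 0 * p 1 ^ 2 * p 2 ^ 3) := by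
  simp [circuitB20, pderiv_mul, pderiv_pow, pderiv_C, pderiv_ofNat']; ring

set_option maxHeartbeats 1000000 in
lemma hess_ne (ha : a ≠ 0)
    (hm : d * (p 0 ^ 3 * p 1 ^ 7 * p 2 ^ 20) = a)
    (hn : e * (p 0 * p 1 ^ 2 * p 2 ^ 5) = -4 * a) :
    hessDet3 (circuitB20 a b c d e) p ≠ 0 := by
  have hval : hessDet3 (circuitB20 a b c d e) p * (p 0 ^ 2 * p 1 ^ 2 * p 2 ^ 2) = 100 * a ^ 3 := by
    rw [hessDet3, Matrix.det_fin_three]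
    simp only [Matrix.of_apply, evxx, evxy, evxz, evyx, evyy, evyz, evzx, evzy, evzz]
    linear_combination (12180 * a ^ 2 + 7860 * (e * (p 0 * p 1 ^ 2 * p 2 ^ 5)) * a
        + 1490 * (e * (p 0 * p 1 ^ 2 * p 2 ^ 5)) ^ 2
        + 12180 * (d * (p 0 ^ 3 * p 1 ^ 7 * p 2 ^ 20)) * a
        + 7860 * (d * (p 0 ^ 3 * p 1 ^ 7 * p 2 ^ 20)) * (e * (p 0 * p 1 ^ 2 * p 2 ^ 5))
        + 12180 * (d * (p 0 ^ 3 * p 1 ^ 7 * p 2 ^ 20)) ^ 2) * hm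
      + (3020 * a ^ 2 + 1210 * (e * (p 0 * p 1 ^ 2 * p 2 ^ 5)) * a
        + 70 * (e * (p 0 * p 1 ^ 2 * p 2 ^ 5)) ^ 2) * hn
  intro h
  rw [h, zero_mul] at hval
  exact (by simp [ha] : (100:ℂ) * a ^ 3 ≠ 0) hval.symm

lemma roots5 (w : ℂ) (hw : w ≠ 0) (hroot : ∃ α : ℂ, α ^ 5 = w) :
    {z : ℂ | z ^ 5 = w}.ncard = 5 := by
  have hζ : IsPrimitiveRoot (Complex.exp (2 * Real.pi * Complex.I / 5)) 5 :=
    Complex.isPrimitiveRoot_exp 5 (by norm_num)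
  have hset : {z : ℂ | z ^ 5 = w} = ↑((Polynomial.nthRoots 5 w).toFinset) := by
    ext z
    simp [Polynomial.mem_nthRoots (by norm_num : 0 < 5)]
  rw [hset, Set.ncard_coe_finset,
    Multiset.toFinset_card_of_nodup (hζ.nthRoots_nodup hw), hζ.card_nthRoots, if_pos hroot]

end CircuitB20Aux

open CircuitB20Aux
theorem circuitB20_five_singular_points
    (a b c d e : ℂ) (ha : a ≠ 0) (hb : b ≠ 0) (hc : c ≠ 0) (hd : d ≠ 0) (he : e ≠ 0)
    (hex : ∃ p : Fin 3 → ℂ, SingularAt3 (circuitB20 a b c d e) p) :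
    {p : Fin 3 → ℂ | SingularAt3 (circuitB20 a b c d e) p}.ncard = 5 ∧
    (∀ p : Fin 3 → ℂ, SingularAt3 (circuitB20 a b c d e) p →
      ∀ ε : ℂ, ε ^ 5 = 1 →
        SingularAt3 (circuitB20 a b c d e) (Function.update p 2 (ε * p 2))) ∧
    (∀ p q : Fin 3 → ℂ, SingularAt3 (circuitB20 a b c d e) p →
      SingularAt3 (circuitB20 a b c d e) q →
        p 0 = q 0 ∧ p 1 = q 1 ∧ ∃ ε : ℂ, ε ^ 5 = 1 ∧ q = Function.update p 2 (ε * p 2)) ∧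
    (∀ p : Fin 3 → ℂ, SingularAt3 (circuitB20 a b c d e) p →
      hessDet3 (circuitB20 a b c d e) p ≠ 0) := by
  obtain ⟨q, hq⟩ := hex
  obtain ⟨hqne, hqb, hqc, hqm, hqn⟩ := forward hq
  have key : ∀ p : Fin 3 → ℂ, SingularAt3 (circuitB20 a b c d e) p ↔
      (p 0 = q 0 ∧ p 1 = q 1 ∧ p 2 ^ 5 = q 2 ^ 5) := by
    intro p
    constructor
    · intro hp
      obtain ⟨hpne, hpb, hpc, hpm, hpn⟩ := forward hp
      have h0 : p 0 = q 0 := mul_left_cancel₀ hb (hpb.trans hqb.symm)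
      have h1 : p 1 = q 1 := mul_left_cancel₀ hc (hpc.trans hqc.symm)
      refine ⟨h0, h1, ?_⟩
      have hcomb := hpn.trans hqn.symm
      rw [h0, h1] at hcomb
      have hne : e * (q 0 * q 1 ^ 2) ≠ 0 :=
        mul_ne_zero he (mul_ne_zero (hqne 0) (pow_ne_zero _ (hqne 1)))
      apply mul_left_cancel₀ hne
      linear_combination hcomb
    · rintro ⟨h0, h1, h2⟩
      apply backward ha
      · rw [h0]; exact hqb
      · rw [h1]; exact hqc
      · rw [h0, h1]
        calc d * (q 0 ^ 3 * q 1 ^ 7 * p 2 ^ 20)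
            = d * (q 0 ^ 3 * q 1 ^ 7 * (p 2 ^ 5) ^ 4) := by ring
          _ = d * (q 0 ^ 3 * q 1 ^ 7 * (q 2 ^ 5) ^ 4) := by rw [h2]
          _ = a := by rw [← hqm]; ring
      · rw [h0, h1]
        calc e * (q 0 * q 1 ^ 2 * p 2 ^ 5)
            = e * (q 0 * q 1 ^ 2 * (q 2 ^ 5)) := by rw [h2]
          _ = -4 * a := hqn
  refine ⟨?_, ?_, ?_, ?_⟩
  · have hS : {p : Fin 3 → ℂ | SingularAt3 (circuitB20 a b c d e) p} =
        (fun z : ℂ => ![q 0, q 1, z]) '' {z : ℂ | z ^ 5 = q 2 ^ 5} := by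
      ext p
      simp only [Set.mem_setOf_eq, Set.mem_image, key]
      constructor
      · rintro ⟨h0, h1, h2⟩
        refine ⟨p 2, h2, ?_⟩
        funext i
        fin_cases i <;> simp [h0, h1]
      · rintro ⟨z, hz, rfl⟩
        refine ⟨by simp, by simp, by simpa using hz⟩
    have hinj : Function.Injective (fun z : ℂ => ![q 0, q 1, z]) := by
      intro x y h
      simpa using congrFun h 2
    rw [hS, Set.ncard_image_of_injective _ hinj]
    exact roots5 _ (pow_ne_zero _ (hqne 2)) ⟨q 2, rfl⟩
  · intro p hp ε hε
    rw [key] at hp ⊢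
    obtain ⟨h0, h1, h2⟩ := hp
    refine ⟨?_, ?_, ?_⟩
    · rw [Function.update_of_ne (by decide : (0 : Fin 3) ≠ 2)]; exact h0
    · rw [Function.update_of_ne (by decide : (1 : Fin 3) ≠ 2)]; exact h1
    · rw [Function.update_self, mul_pow, hε, one_mul]; exact h2
  · intro p r hp hr
    have hp2 : p 2 ≠ 0 := hp.1 2
    rw [key] at hp hr
    refine ⟨hp.1.trans hr.1.symm, hp.2.1.trans hr.2.1.symm, r 2 / p 2, ?_, ?_⟩
    · rw [div_pow, hr.2.2, ← hp.2.2, div_self (pow_ne_zero _ hp2)]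
    · funext i
      fin_cases i
      · show r 0 = Function.update p 2 (r 2 / p 2 * p 2) 0
        rw [Function.update_of_ne (by decide : (0 : Fin 3) ≠ 2), hp.1, hr.1]
      · show r 1 = Function.update p 2 (r 2 / p 2 * p 2) 1
        rw [Function.update_of_ne (by decide : (1 : Fin 3) ≠ 2), hp.2.1, hr.2.1]
      · show r 2 = Function.update p 2 (r 2 / p 2 * p 2) 2
        rw [Function.update_self, div_mul_cancel₀ _ hp2]
  · intro p hp
    obtain ⟨hpne, hpb, hpc, hpm, hpn⟩ := forward hp
    exact hess_ne ha hpm hpn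

end
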